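/- arXiv:math/0102027 — 5 statements merged into one kernel-verified Lean document; each statement's English description precedes it below -/
import Mathlib

section
/- If b_1, ..., b_r are complex numbers on the unit circle such that b_1^n + ... + b_r^n tends to r as n tends to infinity along all naturals, then b_i = 1 for all i. -/
open Filter Finset

lemma cesaro_zero_of_ne_one {b : ℂ} (hb : ‖b‖ = 1) (hb1 : b ≠ 1) :
    Tendsto (fun N : ℕ => (N : ℝ)⁻¹ • ∑ n ∈ Finset.range N, b ^ n) atTop (nhds 0) := by
  have hC : ∀ N : ℕ, ‖∑ n ∈ Finset.range N, b ^ n‖ ≤ 2 / ‖b - 1‖ := by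
    intro N
    rw [geom_sum_eq hb1, norm_div]
    apply div_le_div_of_nonneg_right ?_ (by positivity)
    calc ‖b ^ N - 1‖ ≤ ‖b ^ N‖ + ‖(1 : ℂ)‖ := norm_sub_le _ _
      _ = 2 := by rw [norm_pow, hb]; norm_num
  apply squeeze_zero_norm (a := fun N : ℕ => (N : ℝ)⁻¹ * (2 / ‖b - 1‖))
  · intro N
    rw [norm_smul, norm_inv, Real.norm_natCast]
    exact mul_le_mul_of_nonneg_left (hC N) (by positivity)
  · simpa using (tendsto_one_div_atTop_nhds_zero_nat.mul_const (2 / ‖b - 1‖))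

theorem stmt1 (r : ℕ) (b : Fin r → ℂ)
    (hb : ∀ i, ‖b i‖ = 1)
    (h : Filter.Tendsto (fun n : ℕ => ∑ i, b i ^ n) Filter.atTop (nhds (r : ℂ))) :
    ∀ i, b i = 1 := by
  have h1 : Tendsto (fun N : ℕ => (N : ℝ)⁻¹ • ∑ n ∈ Finset.range N, ∑ i, b i ^ n)
      atTop (nhds (r : ℂ)) := h.cesaro_smul
  have h2 : Tendsto (fun N : ℕ => (N : ℝ)⁻¹ • ∑ n ∈ Finset.range N, ∑ i, b i ^ n)
      atTop (nhds (∑ i, if b i = 1 then (1 : ℂ) else 0)) := by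
    have heq : (fun N : ℕ => (N : ℝ)⁻¹ • ∑ n ∈ Finset.range N, ∑ i, b i ^ n)
        = fun N : ℕ => ∑ i, (N : ℝ)⁻¹ • ∑ n ∈ Finset.range N, b i ^ n := by
      funext N
      rw [Finset.sum_comm, Finset.smul_sum]
    rw [heq]
    apply tendsto_finset_sum
    intro i _
    by_cases hi : b i = 1
    · simp only [hi, if_pos]
      have : Tendsto (fun n : ℕ => (1 : ℂ) ^ n) atTop (nhds 1) := by
        simp
      simpa [hi] using this.cesaro_smul
    · simp only [hi, if_neg]
      exact cesaro_zero_of_ne_one (hb i) hi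
  have hkey : (∑ i, if b i = 1 then (1 : ℂ) else 0) = (r : ℂ) :=
    tendsto_nhds_unique h2 h1
  rw [Finset.sum_boole] at hkey
  have hcard : (Finset.univ.filter (fun i => b i = 1)).card = r := by
    exact_mod_cast hkey
  have huniv : (Finset.univ.filter (fun i => b i = 1)) = Finset.univ := by
    apply Finset.eq_univ_of_card
    simpa using hcard
  intro i
  have := Finset.mem_filter.mp (huniv ▸ Finset.mem_univ i)
  exact this.2
end

section
/- Let S be a finite multiset of nonzero complex numbers and n' > 1 a natural number such that the map λ ↦ (-1)^{n'+1} λ^{n'} permutes S (as a multiset). Then every element of S is a root of unity. -/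
theorem stmt3 (S : Multiset ℂ) (h0 : (0 : ℂ) ∉ S) (n' : ℕ) (hn : 1 < n')
    (hperm : S.map (fun lam => (-1 : ℂ) ^ (n' + 1) * lam ^ n') = S) :
    ∀ lam ∈ S, ∃ k : ℕ, 0 < k ∧ lam ^ k = 1 := by
  intro lam hlam
  set f : ℂ → ℂ := fun x => (-1 : ℂ) ^ (n' + 1) * x ^ n' with hf
  have hmem : ∀ x ∈ S, f x ∈ S := by
    intro x hx
    have : f x ∈ S.map f := Multiset.mem_map_of_mem f hx
    rwa [hperm] at this
  have hlamne : lam ≠ 0 := fun h => h0 (h ▸ hlam)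
  -- iterates stay in S
  have hiter : ∀ k : ℕ, f^[k] lam ∈ S := by
    intro k
    induction k with
    | zero => simpa using hlam
    | succ k ih =>
      rw [Function.iterate_succ_apply']
      exact hmem _ ih
  -- formula for iterates
  have hform : ∀ k : ℕ, ∃ ε : ℂ, (ε = 1 ∨ ε = -1) ∧ f^[k] lam = ε * lam ^ (n' ^ k) := by
    intro k
    induction k with
    | zero => exact ⟨1, Or.inl rfl, by simp⟩
    | succ k ih =>
      obtain ⟨ε, hε, heq⟩ := ih
      have hc : (-1 : ℂ) ^ (n' + 1) = 1 ∨ (-1 : ℂ) ^ (n' + 1) = -1 := by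
        rcases Nat.even_or_odd (n' + 1) with h | h
        · exact Or.inl h.neg_one_pow
        · exact Or.inr h.neg_one_pow
      have hεp : ε ^ n' = 1 ∨ ε ^ n' = -1 := by
        rcases hε with h | h
        · left; rw [h, one_pow]
        · rcases Nat.even_or_odd n' with he | he
          · left; rw [h, he.neg_one_pow]
          · right; rw [h, he.neg_one_pow]
      refine ⟨(-1 : ℂ) ^ (n' + 1) * ε ^ n', ?_, ?_⟩
      · rcases hc with h1 | h1 <;> rcases hεp with h2 | h2 <;> rw [h1, h2] <;> norm_num
      · rw [Function.iterate_succ_apply', heq]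
        show (-1 : ℂ) ^ (n' + 1) * (ε * lam ^ n' ^ k) ^ n' = _
        rw [mul_pow, ← pow_mul, pow_succ]
        ring
  -- pigeonhole
  have hcard : S.toFinset.card < (Finset.range (S.toFinset.card + 1)).card := by
    simp
  have hmaps : ∀ k ∈ Finset.range (S.toFinset.card + 1), f^[k] lam ∈ S.toFinset := by
    intro k _
    exact Multiset.mem_toFinset.mpr (hiter k)
  obtain ⟨a, ha, b, hb, hab, heq⟩ :=
    Finset.exists_ne_map_eq_of_card_lt_of_maps_to hcard hmaps
  -- wlog a < b
  wlog hlt : a < b generalizing a b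
  · exact this b hb a ha hab.symm heq.symm (by omega)
  obtain ⟨ε₁, hε₁, h1⟩ := hform a
  obtain ⟨ε₂, hε₂, h2⟩ := hform b
  have hsq : lam ^ (2 * n' ^ a) = lam ^ (2 * n' ^ b) := by
    have h3 : ε₁ * lam ^ n' ^ a = ε₂ * lam ^ n' ^ b := by rw [← h1, ← h2, heq]
    have h4 : (ε₁ * lam ^ n' ^ a) ^ 2 = (ε₂ * lam ^ n' ^ b) ^ 2 := by rw [h3]
    have he1 : ε₁ ^ 2 = 1 := by rcases hε₁ with h | h <;> rw [h] <;> ring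
    have he2 : ε₂ ^ 2 = 1 := by rcases hε₂ with h | h <;> rw [h] <;> ring
    rw [mul_pow, mul_pow, he1, he2, one_mul, one_mul, ← pow_mul, ← pow_mul,
      mul_comm (n' ^ a) 2, mul_comm (n' ^ b) 2] at h4
    exact h4
  have hexp : 2 * n' ^ a < 2 * n' ^ b := by
    have := Nat.pow_lt_pow_right hn hlt
    omega
  refine ⟨2 * n' ^ b - 2 * n' ^ a, by omega, ?_⟩
  have hne : lam ^ (2 * n' ^ a) ≠ 0 := pow_ne_zero _ hlamne
  have : lam ^ (2 * n' ^ a) * lam ^ (2 * n' ^ b - 2 * n' ^ a) = lam ^ (2 * n' ^ a) * 1 := by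
    rw [← pow_add, mul_one]
    rw [Nat.add_sub_cancel' (le_of_lt hexp)]
    exact hsq.symm
  exact mul_left_cancel₀ hne this
end

section
/- Let λ_1, ..., λ_m be nonzero complex numbers with |λ_1| > |λ_2| > ... > |λ_{k-1}| > |λ_k| = ... = |λ_{k'}| > |λ_{k'+1}| ≥ ... ≥ |λ_m|, where λ_1, ..., λ_{k-1} are negative real numbers. Suppose there exist positive reals a, Λ with a^n σ_k((-λ_1)^n, ..., (-λ_m)^n) = (1+o(1)) Λ^n as n → ∞. Then k = k' and λ_k is a negative real number. -/
open Filter Finset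

private lemma aux_cesaro_re (μ : ℂ) (hμ : ‖μ‖ = 1) :
    Tendsto (fun N : ℕ => (N : ℝ)⁻¹ * ∑ n ∈ Finset.range N, (μ ^ n).re) atTop
      (nhds (if μ = 1 then 1 else 0)) := by
  by_cases h1 : μ = 1
  · rw [if_pos h1]
    subst h1
    have hev : ∀ᶠ N : ℕ in atTop,
        (1 : ℝ) = (N : ℝ)⁻¹ * ∑ n ∈ Finset.range N, ((1:ℂ) ^ n).re := by
      filter_upwards [eventually_ge_atTop 1] with N hN
      have : ((N : ℝ)) ≠ 0 := by positivity
      simp [inv_mul_cancel₀ this]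
    exact Tendsto.congr' hev tendsto_const_nhds
  · rw [if_neg h1]
    have hd : (0:ℝ) < ‖μ - 1‖ := by
      simpa [sub_eq_zero] using h1
    apply squeeze_zero_norm (a := fun N : ℕ => (N : ℝ)⁻¹ * (2 / ‖μ - 1‖))
    · intro N
      have h2 : ∑ n ∈ Finset.range N, (μ ^ n).re = (∑ n ∈ Finset.range N, μ ^ n).re := by
        rw [Complex.re_sum]
      have h3 : ‖∑ n ∈ Finset.range N, μ ^ n‖ ≤ 2 / ‖μ - 1‖ := by
        rw [geom_sum_eq h1, norm_div]
        have hnum : ‖μ ^ N - 1‖ ≤ 2 := by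
          calc ‖μ ^ N - 1‖ ≤ ‖μ ^ N‖ + ‖(1:ℂ)‖ := norm_sub_le _ _
          _ = 2 := by rw [norm_pow, hμ]; norm_num
        gcongr
      have h4 : |(∑ n ∈ Finset.range N, μ ^ n).re| ≤ 2 / ‖μ - 1‖ :=
        (Complex.abs_re_le_norm _).trans h3
      rw [Real.norm_eq_abs, abs_mul, abs_of_nonneg (by positivity : (0:ℝ) ≤ (N:ℝ)⁻¹), h2]
      exact mul_le_mul_of_nonneg_left h4 (by positivity)
    · have := (tendsto_inv_atTop_nhds_zero_nat (𝕜 := ℝ)).mul_const (2 / ‖μ - 1‖)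
      simpa using this

private lemma aux_sigma_sq (s : Finset ℕ) (u : ℕ → ℂ) (hu : ∀ j ∈ s, ‖u j‖ = 1)
    (L : ℂ) (hσ : Tendsto (fun n => ∑ j ∈ s, u j ^ n) atTop (nhds L)) :
    ‖L‖ ^ 2 = ∑ p ∈ s ×ˢ s, (if u p.1 = u p.2 then (1:ℝ) else 0) := by
  have hnormsq : ∀ z : ℂ, ‖z‖ ^ 2 = (z * (starRingEnd ℂ) z).re := by
    intro z
    rw [Complex.mul_conj, Complex.ofReal_re, Complex.normSq_eq_norm_sq]
  -- expand ‖σ n‖² as a double sum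
  have hexp : ∀ n : ℕ, ‖∑ j ∈ s, u j ^ n‖ ^ 2
      = ∑ p ∈ s ×ˢ s, ((u p.1 * (starRingEnd ℂ) (u p.2)) ^ n).re := by
    intro n
    rw [hnormsq, map_sum, Finset.sum_mul_sum, Finset.sum_product, Complex.re_sum]
    refine Finset.sum_congr rfl fun i _ => ?_
    rw [Complex.re_sum]
    refine Finset.sum_congr rfl fun j _ => ?_
    rw [map_pow, ← mul_pow]
  -- limit of Cesàro means, side 1
  have h1 : Tendsto (fun N : ℕ => (N:ℝ)⁻¹ * ∑ n ∈ Finset.range N, ‖∑ j ∈ s, u j ^ n‖ ^ 2)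
      atTop (nhds (‖L‖ ^ 2)) := ((hσ.norm).pow 2).cesaro
  -- side 2
  have h2 : Tendsto (fun N : ℕ => (N:ℝ)⁻¹ * ∑ n ∈ Finset.range N, ‖∑ j ∈ s, u j ^ n‖ ^ 2)
      atTop (nhds (∑ p ∈ s ×ˢ s, (if u p.1 = u p.2 then (1:ℝ) else 0))) := by
    have hrw : ∀ N : ℕ, (N:ℝ)⁻¹ * ∑ n ∈ Finset.range N, ‖∑ j ∈ s, u j ^ n‖ ^ 2
        = ∑ p ∈ s ×ˢ s, ((N:ℝ)⁻¹ * ∑ n ∈ Finset.range N, ((u p.1 * (starRingEnd ℂ) (u p.2)) ^ n).re) := by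
      intro N
      simp only [hexp]
      rw [Finset.sum_comm, Finset.mul_sum]
    rw [funext hrw] at *
    apply tendsto_finset_sum
    intro p hp
    rw [Finset.mem_product] at hp
    have hn1 : ‖u p.1 * (starRingEnd ℂ) (u p.2)‖ = 1 := by
      rw [norm_mul, RCLike.norm_conj, hu _ hp.1, hu _ hp.2, mul_one]
    have hiff : (u p.1 * (starRingEnd ℂ) (u p.2) = 1) ↔ u p.1 = u p.2 := by
      constructor
      · intro h
        have hps : u p.2 ≠ 0 := by
          intro hz; rw [hz] at hn1; simp at hn1
        have h22 : u p.2 * (starRingEnd ℂ) (u p.2) = 1 := by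
          rw [Complex.mul_conj]
          rw [Complex.normSq_eq_norm_sq, hu _ hp.2]
          norm_num
        have := congrArg (· * u p.2) h
        simp only [one_mul] at this
        calc u p.1 = u p.1 * ((starRingEnd ℂ) (u p.2) * u p.2) := by
              rw [mul_comm ((starRingEnd ℂ) (u p.2)), h22, mul_one]
        _ = u p.2 := by rw [← mul_assoc, h, one_mul]
      · intro h
        rw [h, Complex.mul_conj, Complex.normSq_eq_norm_sq, hu _ hp.2]
        norm_num
    have := aux_cesaro_re _ hn1
    rwa [if_congr hiff rfl rfl] at this
  exact tendsto_nhds_unique h1 h2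


private lemma aux_fin_bound {k : ℕ} (f : Fin k → ℕ) (hf : StrictMono f)
    (h0 : ∀ j, 1 ≤ f j) : ∀ j : Fin k, (j : ℕ) + 1 ≤ f j := by
  intro j
  obtain ⟨jv, hjv⟩ := j
  induction jv with
  | zero => exact h0 _
  | succ p ih =>
    have hp : p < k := Nat.lt_of_succ_lt hjv
    have h1 : f ⟨p, hp⟩ < f ⟨p+1, hjv⟩ := hf (show (⟨p, hp⟩ : Fin k) < ⟨p + 1, hjv⟩ by simp [Fin.lt_def])
    have h2 := ih hp
    simp only [Fin.val_mk] at h1 h2 ⊢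
    omega

private lemma aux_prod_Icc (f : ℕ → ℝ) (n : ℕ) :
    ∏ i ∈ Finset.Icc 1 n, f i = ∏ j ∈ Finset.range n, f (j + 1) := by
  induction n with
  | zero => simp
  | succ p ih =>
    rw [Finset.prod_Icc_succ_top (by omega), ih, Finset.prod_range_succ]


set_option maxHeartbeats 2000000 in
theorem stmt6 (m k k' : ℕ) (hk : 1 ≤ k) (hkk' : k ≤ k') (hk'm : k' ≤ m)
    (lam : ℕ → ℂ)
    (hne : ∀ i, 1 ≤ i → i ≤ m → lam i ≠ 0)
    (hneg : ∀ i, 1 ≤ i → i < k → ∃ x : ℝ, x < 0 ∧ lam i = (x : ℂ))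
    (hstrict : ∀ i, 1 ≤ i → i < k → ‖lam (i + 1)‖ < ‖lam i‖)
    (heq : ∀ i, k ≤ i → i ≤ k' → ‖lam i‖ = ‖lam k‖)
    (hdrop : k' < m → ‖lam (k' + 1)‖ < ‖lam k‖)
    (hmono : ∀ i, k' ≤ i → i < m → ‖lam (i + 1)‖ ≤ ‖lam i‖)
    (a Λ : ℝ) (ha : 0 < a) (hΛ : 0 < Λ)
    (hasymp : Tendsto (fun n : ℕ =>
        ((a : ℂ) ^ n * (((Finset.Icc 1 m).val.map (fun i => (-(lam i)) ^ n)).esymm k))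
          / ((Λ : ℂ) ^ n)) atTop (nhds 1)) :
    k = k' ∧ ∃ x : ℝ, x < 0 ∧ lam k = (x : ℂ) := by
  set r : ℕ → ℝ := fun i => ‖lam i‖ with hr
  have hkm : k ≤ m := le_trans hkk' hk'm
  have hrpos : ∀ i, 1 ≤ i → i ≤ m → 0 < r i := fun i h1 h2 => norm_pos_iff.mpr (hne i h1 h2)
  -- monotonicity
  have hstep : ∀ i, 1 ≤ i → i < m → r (i + 1) ≤ r i := by
    intro i h1 h2
    rcases lt_or_ge i k with h | h
    · exact (hstrict i h1 h).le
    rcases lt_or_ge i k' with h' | h'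
    · rw [hr]; simp only
      rw [heq (i + 1) (by omega) (by omega), heq i (by omega) (by omega)]
    rcases eq_or_lt_of_le h' with h'' | h''
    · subst h''
      exact le_trans (hdrop h2).le (heq k' hkk' le_rfl).symm.le
    · exact hmono i h' h2
  have hle : ∀ i j, 1 ≤ i → i ≤ j → j ≤ m → r j ≤ r i := by
    intro i j h1 hij hjm
    induction j with
    | zero => exact absurd (le_trans h1 hij) (by omega)
    | succ p ih =>
      rcases eq_or_lt_of_le hij with rfl | hlt
      · exact le_refl _
      · exact le_trans (hstep p (by omega) (by omega)) (ih (by omega) (by omega))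
  have hdropall : ∀ j, k' < j → j ≤ m → r j < r k := by
    intro j h1 h2
    have hk'm' : k' < m := lt_of_lt_of_le h1 h2
    calc r j ≤ r (k' + 1) := hle (k' + 1) j (by omega) (by omega) h2
    _ < r k := hdrop hk'm'
  -- the head set and its product
  set I : Finset ℕ := Finset.Icc 1 (k - 1) with hI
  set P : ℝ := ∏ i ∈ I, r i with hPdef
  have hIm : ∀ i ∈ I, 1 ≤ i ∧ i ≤ m := by
    intro i hi; rw [hI, Finset.mem_Icc] at hi; omega
  have hP : 0 < P := Finset.prod_pos fun i hi => hrpos i (hIm i hi).1 (hIm i hi).2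
  have hQ : (∏ i ∈ I, (-lam i)) = ((P : ℝ) : ℂ) := by
    rw [hPdef, Complex.ofReal_prod]
    refine Finset.prod_congr rfl fun i hi => ?_
    rw [hI, Finset.mem_Icc] at hi
    obtain ⟨x, hx, hlx⟩ := hneg i (by omega) (by omega)
    rw [hr]; simp only
    rw [hlx, Complex.norm_real, Real.norm_eq_abs, abs_of_neg hx, Complex.ofReal_neg]
  set t : ℝ := a * (P * r k) / Λ with htdef
  have hrkpos : 0 < r k := hrpos k hk hkm
  have ht : 0 < t := by positivity
  set u : ℕ → ℂ := fun j => (-lam j) / ((r k : ℝ) : ℂ) with hu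
  have hrk0 : ((r k : ℝ) : ℂ) ≠ 0 := by
    simp only [ne_eq, Complex.ofReal_eq_zero]; exact ne_of_gt hrkpos
  have hunorm : ∀ j ∈ Finset.Icc k k', ‖u j‖ = 1 := by
    intro j hj
    rw [Finset.mem_Icc] at hj
    rw [hu]; simp only
    rw [norm_div, norm_neg, Complex.norm_real, Real.norm_eq_abs, abs_of_pos hrkpos,
      heq j hj.1 hj.2]
    exact div_self (ne_of_gt hrkpos)
  set σ : ℕ → ℂ := fun n => ∑ j ∈ Finset.Icc k k', u j ^ n with hσdef
  set w : Finset ℕ → ℂ := fun T => (a : ℂ) * (∏ i ∈ T, (-lam i)) / (Λ : ℂ) with hw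
  set S : Finset ℕ := Finset.Icc 1 m with hS
  -- rewrite the hypothesis as a sum over subsets
  have hfg : ∀ n : ℕ, ((a : ℂ) ^ n * (((Finset.Icc 1 m).val.map (fun i => (-(lam i)) ^ n)).esymm k))
      / ((Λ : ℂ) ^ n) = ∑ T ∈ Finset.powersetCard k S, (w T) ^ n := by
    intro n
    rw [Finset.esymm_map_val, Finset.mul_sum, Finset.sum_div]
    refine Finset.sum_congr rfl fun T hT => ?_
    rw [hw]; simp only
    rw [Finset.prod_pow]
    ring
  have hf1 : Tendsto (fun n : ℕ => ∑ T ∈ Finset.powersetCard k S, (w T) ^ n) atTop (nhds 1) :=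
    hasymp.congr hfg
  -- dominant subsets
  set D : Finset (Finset ℕ) := (Finset.Icc k k').image (fun j => insert j I) with hD
  have hjI : ∀ j, k ≤ j → j ∉ I := by
    intro j hj; rw [hI, Finset.mem_Icc]; omega
  have hcardI : I.card = k - 1 := by rw [hI, Nat.card_Icc]; omega
  have hD_sub : D ⊆ Finset.powersetCard k S := by
    intro T hT
    rw [hD, Finset.mem_image] at hT
    obtain ⟨j, hj, rfl⟩ := hT
    rw [Finset.mem_Icc] at hj
    rw [Finset.mem_powersetCard]
    constructor
    · intro i hi
      rw [Finset.mem_insert] at hi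
      rw [hS, Finset.mem_Icc]
      rcases hi with rfl | hi
      · omega
      · have := hIm i hi; omega
    · rw [Finset.card_insert_of_notMem (hjI j hj.1), hcardI]; omega
  have hD_inj : Set.InjOn (fun j => insert j I) (Finset.Icc k k') := by
    intro x hx y hy hxy
    simp only [Finset.coe_Icc, Set.mem_Icc] at hx hy
    simp only at hxy
    have hxm : x ∈ insert y I := hxy ▸ Finset.mem_insert_self x I
    rw [Finset.mem_insert] at hxm
    rcases hxm with h | h
    · exact h
    · exact absurd h (hjI x hx.1)
  -- value of dominant sum
  have hsumD : ∀ n : ℕ, ∑ T ∈ D, (w T) ^ n = ((t : ℝ) : ℂ) ^ n * σ n := by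
    intro n
    rw [hD, Finset.sum_image hD_inj]
    rw [hσdef]; simp only
    rw [Finset.mul_sum]
    refine Finset.sum_congr rfl fun j hj => ?_
    rw [Finset.mem_Icc] at hj
    have : w (insert j I) = ((t : ℝ) : ℂ) * u j := by
      rw [hw]; simp only
      rw [Finset.prod_insert (hjI j hj.1), hQ, htdef, hu]; simp only
      push_cast
      have hL0 : ((Λ : ℝ) : ℂ) ≠ 0 := Complex.ofReal_ne_zero.mpr hΛ.ne'
      field_simp
    rw [this, mul_pow]
  -- strict bound off the dominant set
  have hbound : ∀ T ∈ Finset.powersetCard k S \ D, (∏ i ∈ T, r i) < P * r k := by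
    intro T hT
    rw [Finset.mem_sdiff, Finset.mem_powersetCard] at hT
    obtain ⟨⟨hTsub, hTcard⟩, hTD⟩ := hT
    have hTm : ∀ i ∈ T, 1 ≤ i ∧ i ≤ m := by
      intro i hi
      have := hTsub hi
      rw [hS, Finset.mem_Icc] at this
      exact this
    by_cases hIT : I ⊆ T
    · -- T = insert j I for some j > k'
      have hcard1 : (T \ I).card = 1 := by
        rw [Finset.card_sdiff_of_subset hIT, hTcard, hcardI]; omega
      obtain ⟨j, hj⟩ := Finset.card_eq_one.mp hcard1
      have hjmem : j ∈ T \ I := hj ▸ Finset.mem_singleton_self j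
      rw [Finset.mem_sdiff] at hjmem
      have hTeq : T = insert j I := by
        rw [← Finset.sdiff_union_of_subset hIT, hj, Finset.insert_eq]
      have hjm := hTm j hjmem.1
      have hjk : k ≤ j := by
        have := hjmem.2; rw [hI, Finset.mem_Icc] at this; omega
      have hjk' : k' < j := by
        by_contra hc
        push_neg at hc
        exact hTD (by
          rw [hD]
          exact Finset.mem_image.mpr ⟨j, Finset.mem_Icc.mpr ⟨hjk, hc⟩, hTeq.symm⟩)
      rw [hTeq, Finset.prod_insert hjmem.2]
      calc r j * P < r k * P := mul_lt_mul_of_pos_right (hdropall j hjk' hjm.2) hP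
      _ = P * r k := mul_comm _ _
    · -- some i0 < k is missing from T
      obtain ⟨i0, hi0I, hi0T⟩ := Finset.not_subset.mp hIT
      have hi0 : 1 ≤ i0 ∧ i0 ≤ k - 1 := by rw [hI, Finset.mem_Icc] at hi0I; exact hi0I
      set f : Fin k → ℕ := fun j => T.orderEmbOfFin hTcard j with hf
      have hfmem : ∀ j, f j ∈ T := fun j => T.orderEmbOfFin_mem hTcard j
      have hfm : ∀ j, 1 ≤ f j ∧ f j ≤ m := fun j => hTm _ (hfmem j)
      have hfstrict : StrictMono f := (T.orderEmbOfFin hTcard).strictMono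
      have hflb : ∀ j : Fin k, (j : ℕ) + 1 ≤ f j := aux_fin_bound f hfstrict fun j => (hfm j).1
      have himg : Finset.image f Finset.univ = T := by
        apply Finset.coe_injective
        rw [Finset.coe_image, Finset.coe_univ, Set.image_univ]
        exact T.range_orderEmbOfFin hTcard
      have hPrk : (∏ j : Fin k, r ((j : ℕ) + 1)) = P * r k := by
        rw [Fin.prod_univ_eq_prod_range (fun j => r (j + 1)) k, ← aux_prod_Icc r k]
        conv_lhs => rw [show k = (k - 1) + 1 by omega]
        rw [Finset.prod_Icc_succ_top (by omega)]
        have h1 : (∏ i ∈ Finset.Icc 1 (k - 1), r i) = P := rfl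
        have h2 : (k - 1) + 1 = k := by omega
        rw [h1, h2]
      rw [← himg, Finset.prod_image (fun x _ y _ h => hfstrict.injective h), ← hPrk]
      refine Finset.prod_lt_prod (fun j _ => hrpos _ (hfm j).1 (hfm j).2)
        (fun j _ => hle ((j : ℕ) + 1) (f j) (by omega) (hflb j) (hfm j).2) ?_
      have hp : i0 - 1 < k := by omega
      refine ⟨⟨i0 - 1, hp⟩, Finset.mem_univ _, ?_⟩
      have h1 : f ⟨i0 - 1, hp⟩ ≠ i0 := fun h => hi0T (h ▸ hfmem ⟨i0 - 1, hp⟩)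
      have h2 : i0 ≤ f ⟨i0 - 1, hp⟩ := by
        have := hflb ⟨i0 - 1, hp⟩
        simp only [Fin.val_mk] at this
        omega
      have h3 : i0 + 1 ≤ f ⟨i0 - 1, hp⟩ := by omega
      have h4 : ((⟨i0 - 1, hp⟩ : Fin k) : ℕ) + 1 = i0 := by
        simp only [Fin.val_mk]; omega
      rw [h4]
      calc r (f ⟨i0 - 1, hp⟩) ≤ r (i0 + 1) := hle (i0 + 1) _ (by omega) h3 (hfm _).2
      _ < r i0 := hstrict i0 hi0.1 (by omega)
  have hwT : ∀ T ∈ Finset.powersetCard k S \ D, ‖w T‖ < t := by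
    intro T hT
    have h1 := hbound T hT
    rw [hw]; simp only
    rw [norm_div, norm_mul, Complex.norm_real, Complex.norm_real,
      Real.norm_eq_abs, Real.norm_eq_abs, abs_of_pos ha, abs_of_pos hΛ]
    have h2 : ‖∏ i ∈ T, (-lam i)‖ = ∏ i ∈ T, r i := by
      rw [norm_prod]
      exact Finset.prod_congr rfl fun i _ => by rw [norm_neg]
    rw [h2, htdef, div_lt_div_iff_of_pos_right hΛ]
    exact (mul_lt_mul_iff_right₀ ha).mpr h1
  -- splitting the sum
  have hsplit : ∀ n : ℕ, ∑ T ∈ Finset.powersetCard k S, (w T) ^ n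
      = ((t : ℝ) : ℂ) ^ n * σ n + ∑ T ∈ Finset.powersetCard k S \ D, (w T) ^ n := by
    intro n
    rw [← Finset.sum_sdiff hD_sub, hsumD n, add_comm]
  have hf2 : Tendsto (fun n : ℕ => ((t : ℝ) : ℂ) ^ n * σ n
      + ∑ T ∈ Finset.powersetCard k S \ D, (w T) ^ n) atTop (nhds 1) :=
    Tendsto.congr hsplit hf1
  set B : ℝ := ((Finset.Icc k k').card : ℝ) with hB
  have hB1 : 1 ≤ B := by
    rw [hB]
    have : 1 ≤ (Finset.Icc k k').card := by
      rw [Nat.card_Icc]; omega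
    exact_mod_cast this
  have hσbound : ∀ n, ‖σ n‖ ≤ B := by
    intro n
    calc ‖σ n‖ ≤ ∑ j ∈ Finset.Icc k k', ‖u j ^ n‖ := norm_sum_le _ _
    _ = ∑ j ∈ Finset.Icc k k', 1 := by
        refine Finset.sum_congr rfl fun j hj => ?_
        rw [norm_pow, hunorm j hj, one_pow]
    _ = B := by rw [Finset.sum_const, nsmul_eq_mul, mul_one]
  -- t < 1 is impossible
  have hnot_lt : ¬ t < 1 := by
    intro hlt
    have h1 : Tendsto (fun n : ℕ => ((t : ℝ) : ℂ) ^ n * σ n) atTop (nhds 0) := by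
      apply squeeze_zero_norm (a := fun n : ℕ => B * t ^ n)
      · intro n
        rw [norm_mul, norm_pow, Complex.norm_real, Real.norm_eq_abs, abs_of_pos ht, mul_comm]
        exact mul_le_mul_of_nonneg_right (hσbound n) (by positivity)
      · simpa using (tendsto_pow_atTop_nhds_zero_of_lt_one ht.le hlt).const_mul B
    have h2 : Tendsto (fun n : ℕ => ∑ T ∈ Finset.powersetCard k S \ D, (w T) ^ n)
        atTop (nhds 0) := by
      have h0 : (0 : ℂ) = ∑ T ∈ Finset.powersetCard k S \ D, (0 : ℂ) :=
        Finset.sum_const_zero.symm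
      rw [h0]
      exact tendsto_finset_sum (Finset.powersetCard k S \ D)
        (fun T hT => tendsto_pow_atTop_nhds_zero_of_norm_lt_one ((hwT T hT).trans hlt))
    have h3 := tendsto_nhds_unique hf2 (by simpa using h1.add h2)
    exact one_ne_zero h3
  -- lower bound for the pair sum
  have hlow : B ≤ ∑ p ∈ (Finset.Icc k k') ×ˢ (Finset.Icc k k'),
      (if u p.1 = u p.2 then (1 : ℝ) else 0) := by
    have hinj : ∀ x ∈ Finset.Icc k k', ∀ y ∈ Finset.Icc k k',
        (x, x) = (y, y) → x = y :=
      fun x _ y _ h => congrArg Prod.fst h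
    have hdiag : Finset.image (fun j => (j, j)) (Finset.Icc k k')
        ⊆ (Finset.Icc k k') ×ˢ (Finset.Icc k k') := by
      intro p hp
      rw [Finset.mem_image] at hp
      obtain ⟨j, hj, rfl⟩ := hp
      exact Finset.mem_product.mpr ⟨hj, hj⟩
    calc B = ∑ p ∈ Finset.image (fun j => (j, j)) (Finset.Icc k k'),
        (if u p.1 = u p.2 then (1 : ℝ) else 0) := by
          rw [Finset.sum_image hinj]
          have hone : ∀ j ∈ Finset.Icc k k', (if u j = u j then (1 : ℝ) else 0) = 1 :=
            fun j _ => if_pos rfl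
          rw [Finset.sum_congr rfl hone, Finset.sum_const, nsmul_eq_mul, mul_one, hB]
    _ ≤ _ := Finset.sum_le_sum_of_subset_of_nonneg hdiag
        (fun p _ _ => by split_ifs <;> norm_num)
  rcases eq_or_lt_of_le (not_lt.mp hnot_lt) with ht1 | ht1
  · -- t = 1 : the main case
    have h2 : Tendsto (fun n : ℕ => ∑ T ∈ Finset.powersetCard k S \ D, (w T) ^ n)
        atTop (nhds 0) := by
      have h0 : (0 : ℂ) = ∑ T ∈ Finset.powersetCard k S \ D, (0 : ℂ) :=
        Finset.sum_const_zero.symm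
      rw [h0]
      exact tendsto_finset_sum (Finset.powersetCard k S \ D)
        (fun T hT => tendsto_pow_atTop_nhds_zero_of_norm_lt_one ((hwT T hT).trans_eq ht1.symm))
    have hσ1 : Tendsto σ atTop (nhds 1) := by
      have h3 := hf2.sub h2
      rw [sub_zero] at h3
      refine h3.congr fun n => ?_
      rw [add_sub_cancel_right, ← ht1]
      push_cast
      rw [one_pow, one_mul]
    have hsq := aux_sigma_sq (Finset.Icc k k') u hunorm 1 hσ1
    have hsq1 : (1 : ℝ) = ∑ p ∈ (Finset.Icc k k') ×ˢ (Finset.Icc k k'),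
        (if u p.1 = u p.2 then (1 : ℝ) else 0) := by simpa using hsq
    have hBle : B ≤ 1 := hsq1 ▸ hlow
    have hkk : k = k' := by
      have : ((Finset.Icc k k').card : ℝ) ≤ 1 := hB ▸ hBle
      have h4 : (Finset.Icc k k').card ≤ 1 := by exact_mod_cast this
      rw [Nat.card_Icc] at h4
      omega
    refine ⟨hkk, ?_⟩
    have hσk : ∀ n, σ n = u k ^ n := by
      intro n
      rw [hσdef]
      simp only
      rw [← hkk, Finset.Icc_self, Finset.sum_singleton]
    have hlim : Tendsto (fun n : ℕ => u k ^ n) atTop (nhds 1) := hσ1.congr hσk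
    have hshift : Tendsto (fun n : ℕ => u k ^ (n + 1)) atTop (nhds 1) := by
      have := hlim.comp (tendsto_add_atTop_nat 1)
      exact this
    have hlim2 : Tendsto (fun n : ℕ => u k ^ n * u k) atTop (nhds (1 * u k)) :=
      hlim.mul_const (u k)
    have huk : u k = 1 := by
      have h5 := tendsto_nhds_unique hshift (hlim2.congr fun n => (pow_succ (u k) n).symm)
      rw [one_mul] at h5
      exact h5.symm
    have hlamk : lam k = -((r k : ℝ) : ℂ) := by
      have h6 : -lam k / ((r k : ℝ) : ℂ) = 1 := huk
      have h7 : -lam k = ((r k : ℝ) : ℂ) := by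
        field_simp at h6
        exact h6
      linear_combination -h7
    exact ⟨-(r k), by linarith, by rw [hlamk]; push_cast; ring⟩
  · -- t > 1 : impossible
    exfalso
    have htne : ((t : ℝ) : ℂ) ≠ 0 := Complex.ofReal_ne_zero.mpr ht.ne'
    have htinv : ‖(((t : ℝ))⁻¹ : ℂ)‖ < 1 := by
      rw [← Complex.ofReal_inv, Complex.norm_real, Real.norm_eq_abs,
        abs_of_pos (by positivity)]
      rw [inv_lt_one_iff₀]
      right; exact ht1
    have hfirst : Tendsto (fun n : ℕ => (∑ T ∈ Finset.powersetCard k S, (w T) ^ n)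
        * ((((t : ℝ) : ℂ))⁻¹) ^ n) atTop (nhds 0) := by
      have := hf1.mul (tendsto_pow_atTop_nhds_zero_of_norm_lt_one htinv)
      simpa using this
    have hsecond : Tendsto (fun n : ℕ => ∑ T ∈ Finset.powersetCard k S \ D,
        (w T * (((t : ℝ) : ℂ))⁻¹) ^ n) atTop (nhds 0) := by
      have h0 : (0 : ℂ) = ∑ T ∈ Finset.powersetCard k S \ D, (0 : ℂ) :=
        Finset.sum_const_zero.symm
      rw [h0]
      refine tendsto_finset_sum (Finset.powersetCard k S \ D)
        (fun T hT => tendsto_pow_atTop_nhds_zero_of_norm_lt_one (x := w T * (((t : ℝ) : ℂ))⁻¹) ?_)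
      · rw [norm_mul]
        calc ‖w T‖ * ‖(((t : ℝ) : ℂ))⁻¹‖ < t * ‖(((t : ℝ) : ℂ))⁻¹‖ := by
              apply mul_lt_mul_of_pos_right (hwT T hT)
              rw [norm_pos_iff]
              exact inv_ne_zero htne
        _ = 1 := by
              rw [← Complex.ofReal_inv, Complex.norm_real, Real.norm_eq_abs,
                abs_of_pos (by positivity)]
              field_simp
    have hσeq : ∀ n : ℕ, σ n = (∑ T ∈ Finset.powersetCard k S, (w T) ^ n)
        * ((((t : ℝ) : ℂ))⁻¹) ^ n
        - ∑ T ∈ Finset.powersetCard k S \ D, (w T * (((t : ℝ) : ℂ))⁻¹) ^ n := by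
      intro n
      have h := hsplit n
      have key : ((t : ℝ) : ℂ) ^ n * (((t : ℝ) : ℂ))⁻¹ ^ n = 1 := by
        rw [← mul_pow, mul_inv_cancel₀ htne, one_pow]
      rw [h]
      simp only [mul_pow, ← Finset.sum_mul]
      rw [add_mul, add_sub_cancel_right, mul_comm (((t : ℝ) : ℂ) ^ n), mul_assoc, key, mul_one]
    have hσ0 : Tendsto σ atTop (nhds 0) := by
      have := hfirst.sub hsecond
      rw [sub_zero] at this
      exact this.congr fun n => (hσeq n).symm
    have hsq := aux_sigma_sq (Finset.Icc k k') u hunorm 0 hσ0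
    have hsq0 : (0 : ℝ) = ∑ p ∈ (Finset.Icc k k') ×ˢ (Finset.Icc k k'),
        (if u p.1 = u p.2 then (1 : ℝ) else 0) := by simpa using hsq
    linarith [hsq0 ▸ hlow]
end

section
/- Suppose λ_1, ..., λ_m are nonzero complex numbers and a is a nonzero complex number such that for every n ≥ 1 the quantity a^n Σ_i λ_i^n is a nonnegative real number, and moreover a λ_i is real for each i with |a λ_1| strictly greater than |a λ_i| for i ≥ 2. Then a λ_1 > 0. -/
theorem stmt11 (m : ℕ) (hm : 0 < m) (lam : Fin m → ℂ)
    (hne : ∀ i, lam i ≠ 0) (a : ℂ) (ha : a ≠ 0)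
    (hnonneg : ∀ n : ℕ, 1 ≤ n → ∃ x : ℝ, 0 ≤ x ∧ a ^ n * ∑ i, lam i ^ n = (x : ℂ))
    (hreal : ∀ i, ∃ x : ℝ, a * lam i = (x : ℂ))
    (hdom : ∀ i : Fin m, i ≠ ⟨0, hm⟩ → ‖a * lam i‖ < ‖a * lam ⟨0, hm⟩‖) :
    ∃ x : ℝ, 0 < x ∧ a * lam ⟨0, hm⟩ = (x : ℂ) := by
  classical
  set i0 : Fin m := ⟨0, hm⟩ with hi0
  choose f hf using hreal
  have hfne : ∀ i, f i ≠ 0 := by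
    intro i h
    apply mul_ne_zero ha (hne i)
    rw [hf i, h, Complex.ofReal_zero]
  have hsum : ∀ n : ℕ, 1 ≤ n → 0 ≤ ∑ i, f i ^ n := by
    intro n hn
    obtain ⟨x, hx, hx2⟩ := hnonneg n hn
    have h1 : ((∑ i, f i ^ n : ℝ) : ℂ) = (x : ℂ) := by
      rw [← hx2, Finset.mul_sum]
      push_cast
      refine Finset.sum_congr rfl fun i _ => ?_
      rw [← mul_pow, hf i]
    rw [Complex.ofReal_inj.mp h1]; exact hx
  set b : ℝ := f i0 with hb
  have hbne : b ≠ 0 := hfne i0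
  have hpos : 0 < b := by
    rcases hbne.lt_or_gt with hneg | hpos
    · exfalso
      have habs : 0 < |b| := abs_pos.mpr hbne
      set T : Finset (Fin m) := Finset.univ.erase i0 with hT
      have hlt : ∀ i ∈ T, |(f i / |b|)| < 1 := by
        intro i hi
        have hi' : i ≠ i0 := Finset.ne_of_mem_erase hi
        have := hdom i hi'
        rw [hf i, hf i0, Complex.norm_real, Complex.norm_real,
          Real.norm_eq_abs, Real.norm_eq_abs] at this
        rw [abs_div, abs_abs, div_lt_one habs]
        exact this
      have htend : Filter.Tendsto (fun n => ∑ i ∈ T, (f i / |b|) ^ n)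
          Filter.atTop (nhds 0) := by
        have := tendsto_finset_sum T
          (fun i hi => tendsto_pow_atTop_nhds_zero_of_abs_lt_one (hlt i hi))
        simpa using this
      have hev : ∀ᶠ n in Filter.atTop, (∑ i ∈ T, (f i / |b|) ^ n) < 1 :=
        htend.eventually_lt_const one_pos
      obtain ⟨N, hN⟩ := Filter.eventually_atTop.mp hev
      set n := 2 * N + 1 with hn
      have hodd : Odd n := ⟨N, by ring⟩
      have hSn : (∑ i ∈ T, (f i / |b|) ^ n) < 1 := hN n (by omega)
      have hsplit : ∑ i, f i ^ n = (∑ i ∈ T, f i ^ n) + b ^ n := by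
        rw [hT, Finset.sum_erase_add _ _ (Finset.mem_univ i0)]
      have hbpow : b ^ n = -(|b| ^ n) := by
        rw [abs_of_neg hneg, hodd.neg_pow, neg_neg]
      have hTsum : (∑ i ∈ T, f i ^ n) = |b| ^ n * ∑ i ∈ T, (f i / |b|) ^ n := by
        rw [Finset.mul_sum]
        refine Finset.sum_congr rfl fun i _ => ?_
        rw [div_pow, mul_div_cancel₀]
        exact pow_ne_zero _ (ne_of_gt habs)
      have h0 := hsum n (by omega)
      rw [hsplit, hbpow, hTsum] at h0
      have hbp : 0 < |b| ^ n := pow_pos habs n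
      nlinarith
    · exact hpos
  exact ⟨b, hpos, hf i0⟩
end

section
/- Let x_1, ..., x_m be complex numbers and suppose that for every positive integer n, the power sum x_1^n + ... + x_m^n is a real number. Then the multiset {x_1, ..., x_m} is closed under complex conjugation. -/
/-!
Newton's identities express `k · e_k` through `e_0, …, e_{k-1}` and the power sums
`p_1, …, p_k`, so in characteristic zero the power sums determine all elementary symmetric
functions, hence the polynomial `∏ (X - x_i)`, hence the multiset of its roots. Conjugation
preserves real power sums, so the conjugated family has the same multiset of values.
-/

open Polynomial Finset

variable {ι R : Type*} [Fintype ι] [CommRing R]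

theorem MvPolynomial.aeval_psum (x : ι → R) (n : ℕ) :
    aeval x (psum ι R n) = ∑ i, x i ^ n := by
  simp [psum]

theorem natCast_mul_esymm_map_eq_sum (x : ι → R) (k : ℕ) :
    k * (univ.val.map x).esymm k = (-1) ^ (k + 1) *
      ∑ a ∈ antidiagonal k with a.1 < k,
        (-1) ^ a.1 * (univ.val.map x).esymm a.1 * ∑ i, x i ^ a.2 := by
  simpa [map_mul, map_sum, map_pow, MvPolynomial.aeval_esymm_eq_multiset_esymm,
    MvPolynomial.aeval_psum] using
    congrArg (MvPolynomial.aeval x) (MvPolynomial.mul_esymm_eq_sum ι R k)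

theorem Multiset.prod_X_sub_C_eq_of_esymm_eq {s t : Multiset R}
    (hcard : Multiset.card s = Multiset.card t) (h : ∀ k, s.esymm k = t.esymm k) :
    (s.map fun a => X - C a).prod = (t.map fun a => X - C a).prod := by
  rw [Multiset.prod_X_sub_X_eq_sum_esymm, Multiset.prod_X_sub_X_eq_sum_esymm, hcard]
  simp only [h]

theorem Multiset.eq_of_esymm_eq [IsDomain R] {s t : Multiset R}
    (hcard : Multiset.card s = Multiset.card t) (h : ∀ k, s.esymm k = t.esymm k) : s = t := by
  simpa only [roots_multiset_prod_X_sub_C] using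
    congrArg roots (Multiset.prod_X_sub_C_eq_of_esymm_eq hcard h)

section CharZero

variable [IsDomain R] [CharZero R]

theorem esymm_map_eq_of_sum_pow_eq {x y : ι → R}
    (h : ∀ n, 1 ≤ n → ∑ i, x i ^ n = ∑ i, y i ^ n) (k : ℕ) :
    (univ.val.map x).esymm k = (univ.val.map y).esymm k := by
  induction k using Nat.strong_induction_on with
  | _ k ih =>
    rcases Nat.eq_zero_or_pos k with rfl | hk
    · simp [Multiset.esymm]
    · refine mul_left_cancel₀ (Nat.cast_ne_zero.mpr hk.ne' : (k : R) ≠ 0) ?_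
      rw [natCast_mul_esymm_map_eq_sum, natCast_mul_esymm_map_eq_sum]
      congr 1
      refine sum_congr rfl fun a ha => ?_
      obtain ⟨hsum, hlt⟩ : a.1 + a.2 = k ∧ a.1 < k := by simpa using ha
      rw [ih a.1 hlt, h a.2 (by omega)]

theorem multiset_map_eq_of_sum_pow_eq {x y : ι → R}
    (h : ∀ n, 1 ≤ n → ∑ i, x i ^ n = ∑ i, y i ^ n) :
    univ.val.map x = univ.val.map y :=
  Multiset.eq_of_esymm_eq (by simp) (esymm_map_eq_of_sum_pow_eq h)

end CharZero

theorem stmt18 (m : ℕ) (x : Fin m → ℂ)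
    (h : ∀ n : ℕ, 1 ≤ n → ∃ r : ℝ, ∑ i, x i ^ n = (r : ℂ)) :
    (Finset.univ.val.map x).map (starRingEnd ℂ) = Finset.univ.val.map x := by
  rw [Multiset.map_map]
  refine multiset_map_eq_of_sum_pow_eq fun n hn => ?_
  obtain ⟨r, hr⟩ := h n hn
  simp only [Function.comp_apply, ← map_pow, ← map_sum, hr, Complex.conj_ofReal]
end
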